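/- Let Γ be a basic game that has a strictly convex potential in each state, let I be an information structure, and let ŷ* be a Bayesian Wardrop equilibrium of (Γ, I) with interim total flows (y*(τ))_τ; these total flows are unique among Bayesian Wardrop equilibria at every type profile τ with Σ_θ p(θ)π(τ|θ) > 0. Then for every δ > 0 there exists α > 0 such that for every интерim flow profile ŷ with Φ_π(ŷ) ≤ min Φ_π + α, one has |y_a(τ) − y*_a(τ)| ≤ δ for every action a and every type profile τ with Σ_θ p(θ)π(τ|θ) > 0. -/

import Mathlib

noncomputable section

namespace NonatomicGames

/-- An information structure: finitely many populations with sizes summing to one,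
a finite type set per population, and a signal distribution `π θ` for each state. -/
structure InfoStructure (Θ : Type) where
  K : Type
  [instFintypeK : Fintype K]
  [instDecEqK : DecidableEq K]
  T : K → Type
  [instFintypeT : ∀ k, Fintype (T k)]
  [instDecEqT : ∀ k, DecidableEq (T k)]
  γ : K → ℝ
  γ_pos : ∀ k, 0 < γ k
  γ_sum : ∑ k, γ k = 1
  π : Θ → (∀ k, T k) → ℝ
  π_nonneg : ∀ θ τ, 0 ≤ π θ τ
  π_sum : ∀ θ, ∑ τ, π θ τ = 1

attribute [instance] InfoStructure.instFintypeK InfoStructure.instDecEqK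
  InfoStructure.instFintypeT InfoStructure.instDecEqT

/-- A direct information structure: the type set of each population is the action set `A`. -/
structure DirectInfoStructure (A Θ : Type) [Fintype A] [DecidableEq A] where
  K : Type
  [instFintypeK : Fintype K]
  [instDecEqK : DecidableEq K]
  γ : K → ℝ
  γ_pos : ∀ k, 0 < γ k
  γ_sum : ∑ k, γ k = 1
  π : Θ → (K → A) → ℝ
  π_nonneg : ∀ θ τ, 0 ≤ π θ τ
  π_sum : ∀ θ, ∑ τ, π θ τ = 1

attribute [instance] DirectInfoStructure.instFintypeK DirectInfoStructure.instDecEqK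

open MeasureTheory Finset

variable {A Θ : Type} [Fintype A] [DecidableEq A] [Fintype Θ]

/-- The information structure associated with a direct information structure. -/
def DirectInfoStructure.toInfo (I : DirectInfoStructure A Θ) : InfoStructure Θ where
  K := I.K
  instFintypeK := I.instFintypeK
  instDecEqK := I.instDecEqK
  T := fun _ => A
  instFintypeT := fun _ => inferInstanceAs (Fintype A)
  instDecEqT := fun _ => inferInstanceAs (DecidableEq A)
  γ := I.γ
  γ_pos := I.γ_pos
  γ_sum := I.γ_sum
  π := I.π
  π_nonneg := I.π_nonneg
  π_sum := I.π_sum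

/-- The obedient interim flow profile of a direct information structure:
population `k` receiving recommendation `t` puts all its mass `γ k` on action `t`. -/
def DirectInfoStructure.obedient (I : DirectInfoStructure A Θ) :
    ∀ _k : I.K, A → A → ℝ :=
  fun k t a => if t = a then I.γ k else 0

/-- `yhat` is an interim flow profile: nonnegative flows summing to the population sizes. -/
def IsInterim (I : InfoStructure Θ) (yhat : ∀ k, I.T k → A → ℝ) : Prop :=
  (∀ k t a, 0 ≤ yhat k t a) ∧ ∀ k t, ∑ a, yhat k t a = I.γ k

/-- The interim total flow profile given the type profile `τ`. -/
def totalFlow (I : InfoStructure Θ) (yhat : ∀ k, I.T k → A → ℝ) (τ : ∀ k, I.T k) :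
    A → ℝ :=
  fun a => ∑ k, yhat k (τ k) a

/-- The total probability `P(τᵏ)` of type `tk` for population `k`. -/
def typeProb (I : InfoStructure Θ) (p : Θ → ℝ) (k : I.K) (tk : I.T k) : ℝ :=
  ∑ θ, ∑ τ : ∀ j, I.T j, if τ k = tk then p θ * I.π θ τ else 0

/-- Bayesian Wardrop ε-equilibrium of the basic game `(p, c)` extended with `I`. -/
def IsBWEps (I : InfoStructure Θ) (p : Θ → ℝ) (c : A → (A → ℝ) → Θ → ℝ) (ε : ℝ)
    (yhat : ∀ k, I.T k → A → ℝ) : Prop :=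
  IsInterim I yhat ∧
  ∀ (k : I.K) (tk : I.T k), 0 < typeProb I p k tk →
    ∀ a b : A, 0 < yhat k tk a →
      (∑ θ, ∑ τ : ∀ j, I.T j,
        if τ k = tk then
          p θ * I.π θ τ * (c a (totalFlow I yhat τ) θ - c b (totalFlow I yhat τ) θ)
        else 0)
      ≤ ε * typeProb I p k tk

/-- The outcome (state-dependent distribution over flow profiles) induced by `yhat`. -/
def outcomeMeasure (I : InfoStructure Θ) (yhat : ∀ k, I.T k → A → ℝ) (θ : Θ) :
    Measure (A → ℝ) :=
  ∑ τ : ∀ k, I.T k, ENNReal.ofReal (I.π θ τ) • Measure.dirac (totalFlow I yhat τ)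

/-- The probability that the induced outcome puts on the flow profile `z` in state `θ`. -/
def outcomeWeight (I : InfoStructure Θ) (yhat : ∀ k, I.T k → A → ℝ) (θ : Θ)
    (z : A → ℝ) : ℝ :=
  ∑ τ : ∀ k, I.T k, if totalFlow I yhat τ = z then I.π θ τ else 0

/-- The auxiliary (non-normalized interim) cost `C_a^{k,τᵏ}(yhat)`. -/
def auxCost (I : InfoStructure Θ) (p : Θ → ℝ) (c : A → (A → ℝ) → Θ → ℝ)
    (yhat : ∀ k, I.T k → A → ℝ) (k : I.K) (tk : I.T k) (a : A) : ℝ :=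
  ∑ θ, ∑ τ : ∀ j, I.T j,
    if τ k = tk then p θ * I.π θ τ * c a (totalFlow I yhat τ) θ else 0

/-- The potential `Φ_π` of the auxiliary multi-population game. -/
def potPi (I : InfoStructure Θ) (p : Θ → ℝ) (Φ : Θ → (A → ℝ) → ℝ)
    (yhat : ∀ k, I.T k → A → ℝ) : ℝ :=
  ∑ θ, ∑ τ : ∀ k, I.T k, p θ * I.π θ τ * Φ θ (totalFlow I yhat τ)

/-- The social cost `SC(y, θ) = Σ_a y_a c_a(y, θ)`. -/
def socialCost (c : A → (A → ℝ) → Θ → ℝ) (y : A → ℝ) (θ : Θ) : ℝ :=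
  ∑ a, y a * c a y θ

/-- The total cost `TC(yhat)`. -/
def totalCost (I : InfoStructure Θ) (p : Θ → ℝ) (c : A → (A → ℝ) → Θ → ℝ)
    (yhat : ∀ k, I.T k → A → ℝ) : ℝ :=
  ∑ k, ∑ tk : I.T k, ∑ a, yhat k tk a * auxCost I p c yhat k tk a

/-- An outcome: a state-dependent Borel probability measure supported on the simplex `Y`. -/
def IsOutcome (μ : Θ → Measure (A → ℝ)) : Prop :=
  (∀ θ, IsProbabilityMeasure (μ θ)) ∧ ∀ θ, μ θ (stdSimplex ℝ A)ᶜ = 0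

/-- Bayes correlated Wardrop equilibrium of the basic game `(p, c)`. -/
def IsBCWE (p : Θ → ℝ) (c : A → (A → ℝ) → Θ → ℝ) (μ : Θ → Measure (A → ℝ)) : Prop :=
  IsOutcome μ ∧
  ∀ a b : A,
    ∑ θ, p θ * ∫ y, y a * c a y θ ∂(μ θ) ≤ ∑ θ, p θ * ∫ y, y a * c b y θ ∂(μ θ)

/-- `Φ` is a (state-by-state) potential for the cost profile `c`: for each state it is
continuously differentiable on an open neighborhood of the simplex and its partial
derivative in the direction of each action `a` is the cost of `a`. -/
def IsPotential (c : A → (A → ℝ) → Θ → ℝ) (Φ : Θ → (A → ℝ) → ℝ) : Prop :=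
  ∀ θ, ∃ U : Set (A → ℝ), IsOpen U ∧ stdSimplex ℝ A ⊆ U ∧
    ContDiffOn ℝ 1 (Φ θ) U ∧
    ∀ y ∈ stdSimplex ℝ A, ∀ a, fderiv ℝ (Φ θ) y (Pi.single a 1) = c a y θ

end NonatomicGames

/-!
Along the segment from an equilibrium `ŷ` to any interim profile `ẑ`, convexity of each `Φ_θ`
bounds the increase of `Φ_π` below by its directional derivative; regrouped by population and
type, this derivative is `Σ (ẑ − ŷ) · C` with the interim costs `C` of `ŷ`, which is nonnegative
by the Wardrop conditions. So equilibria minimize `Φ_π`. Strict convexity makes the total flows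
of minimizers agree on type profiles of positive probability, since otherwise their midpoint would
do strictly better. Finally, the interim profiles whose total flow is `δ`-far from that of `ŷ*`
at such a type profile form a compact set containing no minimizer, so on it `Φ_π` exceeds its
minimum by some `α > 0`.
-/

theorem ConvexOn.add_le_of_hasFDerivAt {E : Type*} [NormedAddCommGroup E] [NormedSpace ℝ E]
    {s : Set E} {f : E → ℝ} {f' : E →L[ℝ] ℝ} {x y : E} (hf : ConvexOn ℝ s f)
    (hx : x ∈ s) (hy : y ∈ s) (hf' : HasFDerivAt f f' x) :
    f x + f' (y - x) ≤ f y := by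
  have hline : ConvexOn ℝ (Set.Icc (0 : ℝ) 1) (f ∘ AffineMap.lineMap x y) :=
    (hf.comp_affineMap _).subset (fun t ht => hf.1.lineMap_mem hx hy ht) (convex_Icc 0 1)
  have hderiv : HasDerivAt (f ∘ AffineMap.lineMap x y) (f' (y - x)) (0 : ℝ) :=
    hf'.comp_hasDerivAt_of_eq 0 AffineMap.hasDerivAt_lineMap (AffineMap.lineMap_apply_zero _ _).symm
  have := hline.le_slope_of_hasDerivAt (by simp) (by simp) zero_lt_one hderiv
  rwa [slope_def_field, Function.comp_apply, Function.comp_apply, AffineMap.lineMap_apply_zero,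
    AffineMap.lineMap_apply_one, sub_zero, div_one, le_sub_iff_add_le'] at this

theorem IsCompact.exists_pos_forall_add_lt {X : Type*} [TopologicalSpace X] {K : Set X}
    (hK : IsCompact K) {f : X → ℝ} (hf : ContinuousOn f K) {m : ℝ}
    (h : ∀ x ∈ K, m < f x) : ∃ α > 0, ∀ x ∈ K, m + α < f x := by
  rcases K.eq_empty_or_nonempty with rfl | hne
  · exact ⟨1, one_pos, by simp⟩
  obtain ⟨w, hwK, hwmin⟩ := hK.exists_isMinOn hne hf
  refine ⟨(f w - m) / 2, by linarith [h w hwK], fun x hx => ?_⟩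
  linarith [h w hwK, isMinOn_iff.mp hwmin x hx]

namespace NonatomicGames

open Finset

variable {A Θ : Type}

section

variable {I : InfoStructure Θ} {p : Θ → ℝ} {c : A → (A → ℝ) → Θ → ℝ}
  {Φ : Θ → (A → ℝ) → ℝ}

theorem totalFlow_sub (y z : ∀ k, I.T k → A → ℝ) (τ : ∀ k, I.T k) :
    totalFlow I (z - y) τ = totalFlow I z τ - totalFlow I y τ := by
  funext a
  simp [totalFlow]

theorem totalFlow_smul_add_smul (s t : ℝ) (y z : ∀ k, I.T k → A → ℝ) (τ : ∀ k, I.T k) :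
    totalFlow I (s • y + t • z) τ = s • totalFlow I y τ + t • totalFlow I z τ := by
  funext a
  simp [totalFlow, sum_add_distrib, mul_sum]

theorem continuous_totalFlow (τ : ∀ k, I.T k) :
    Continuous fun y : ∀ k, I.T k → A → ℝ => totalFlow I y τ := by
  unfold totalFlow
  fun_prop

theorem IsInterim.totalFlow_mem_stdSimplex [Fintype A] {y : ∀ k, I.T k → A → ℝ}
    (hy : IsInterim I y) (τ : ∀ k, I.T k) : totalFlow I y τ ∈ stdSimplex ℝ A := by
  refine ⟨fun a => sum_nonneg fun k _ => hy.1 k (τ k) a, ?_⟩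
  unfold totalFlow
  rw [sum_comm]
  simp only [hy.2, I.γ_sum]

theorem convex_setOf_isInterim [Fintype A] :
    Convex ℝ {y : ∀ k, I.T k → A → ℝ | IsInterim I y} := by
  intro y hy z hz s t hs ht hst
  refine ⟨fun k tk a => ?_, fun k tk => ?_⟩
  · simpa using add_nonneg (mul_nonneg hs (hy.1 k tk a)) (mul_nonneg ht (hz.1 k tk a))
  · simp [sum_add_distrib, ← mul_sum, hy.2, hz.2, ← add_mul, hst]

theorem isCompact_setOf_isInterim [Fintype A] :
    IsCompact {y : ∀ k, I.T k → A → ℝ | IsInterim I y} := by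
  have hclosed : IsClosed {y : ∀ k, I.T k → A → ℝ | IsInterim I y} := by
    simp only [IsInterim, Set.ofPred_and, Set.ofPred_forall]
    exact (isClosed_iInter fun k => isClosed_iInter fun tk => isClosed_iInter fun a =>
        isClosed_le continuous_const (by fun_prop)).inter
      (isClosed_iInter fun k => isClosed_iInter fun tk =>
        isClosed_eq (by fun_prop) continuous_const)
  refine (isCompact_univ_pi fun k => isCompact_univ_pi fun tk => isCompact_univ_pi fun a =>
    isCompact_Icc (a := 0) (b := 1)).of_isClosed_subset hclosed fun y hy k _ tk _ a _ => ?_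
  have hγ : I.γ k ≤ 1 := I.γ_sum ▸ single_le_sum (fun j _ => (I.γ_pos j).le) (mem_univ k)
  have hya : y k tk a ≤ I.γ k := hy.2 k tk ▸ single_le_sum (fun b _ => hy.1 k tk b) (mem_univ a)
  exact ⟨hy.1 k tk a, hya.trans hγ⟩

theorem IsPotential.hasFDerivAt [Fintype A] [DecidableEq A] (hΦ : IsPotential c Φ) (θ : Θ)
    {y : A → ℝ} (hy : y ∈ stdSimplex ℝ A) : HasFDerivAt (Φ θ) (fderiv ℝ (Φ θ) y) y := by
  obtain ⟨U, hU, hsub, hdiff, -⟩ := hΦ θ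
  exact ((hdiff.contDiffAt (hU.mem_nhds (hsub hy))).differentiableAt one_ne_zero).hasFDerivAt

theorem IsPotential.fderiv_apply [Fintype A] [DecidableEq A] (hΦ : IsPotential c Φ) (θ : Θ)
    {y : A → ℝ} (hy : y ∈ stdSimplex ℝ A) (d : A → ℝ) :
    fderiv ℝ (Φ θ) y d = ∑ a, d a * c a y θ := by
  obtain ⟨-, -, -, -, hgrad⟩ := hΦ θ
  conv_lhs => rw [← univ_sum_single d]
  rw [map_sum]
  refine sum_congr rfl fun a _ => ?_
  rw [← hgrad y hy a, ← smul_eq_mul, ← map_smul, ← Pi.single_smul, smul_eq_mul, mul_one]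

theorem IsPotential.add_sum_mul_le [Fintype A] [DecidableEq A] (hΦ : IsPotential c Φ)
    {θ : Θ} (hconv : ConvexOn ℝ (stdSimplex ℝ A) (Φ θ)) {y z : A → ℝ}
    (hy : y ∈ stdSimplex ℝ A) (hz : z ∈ stdSimplex ℝ A) :
    Φ θ y + ∑ a, (z a - y a) * c a y θ ≤ Φ θ z := by
  simpa [hΦ.fderiv_apply θ hy] using hconv.add_le_of_hasFDerivAt hy hz (hΦ.hasFDerivAt θ hy)

theorem IsPotential.continuousOn_potPi [Fintype A] [DecidableEq A] [Fintype Θ]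
    (hΦ : IsPotential c Φ) :
    ContinuousOn (potPi I p Φ) {y : ∀ k, I.T k → A → ℝ | IsInterim I y} := by
  refine continuousOn_finsetSum _ fun θ _ => continuousOn_finsetSum _ fun τ _ => ?_
  obtain ⟨U, -, hsub, hdiff, -⟩ := hΦ θ
  exact continuousOn_const.mul <| hdiff.continuousOn.comp (continuous_totalFlow τ).continuousOn
    fun y hy => hsub (IsInterim.totalFlow_mem_stdSimplex hy τ)

theorem typeProb_nonneg [Fintype Θ] (hp : ∀ θ, 0 ≤ p θ) (k : I.K) (tk : I.T k) :
    0 ≤ typeProb I p k tk :=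
  sum_nonneg fun θ _ => sum_nonneg fun τ _ => by
    split_ifs
    exacts [mul_nonneg (hp θ) (I.π_nonneg θ τ), le_rfl]

theorem auxCost_eq_zero_of_typeProb_eq_zero [Fintype Θ] (hp : ∀ θ, 0 ≤ p θ)
    (y : ∀ k, I.T k → A → ℝ) {k : I.K} {tk : I.T k} (h : typeProb I p k tk = 0) (a : A) :
    auxCost I p c y k tk a = 0 := by
  have hnonneg (θ : Θ) (τ : ∀ j, I.T j) : 0 ≤ if τ k = tk then p θ * I.π θ τ else 0 := by
    split_ifs
    exacts [mul_nonneg (hp θ) (I.π_nonneg θ τ), le_rfl]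
  have hzero (θ : Θ) (τ : ∀ j, I.T j) : (if τ k = tk then p θ * I.π θ τ else 0) = 0 :=
    (sum_eq_zero_iff_of_nonneg fun τ _ => hnonneg θ τ).1
      ((sum_eq_zero_iff_of_nonneg fun θ _ => sum_nonneg fun τ _ => hnonneg θ τ).1 h θ
        (mem_univ θ)) τ (mem_univ τ)
  refine sum_eq_zero fun θ _ => sum_eq_zero fun τ _ => ?_
  have := hzero θ τ
  split_ifs at this ⊢ <;> simp [this]

theorem IsBWEps.auxCost_le [Fintype A] [Fintype Θ] {y : ∀ k, I.T k → A → ℝ}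
    (hy : IsBWEps I p c 0 y) {k : I.K} {tk : I.T k} (hP : 0 < typeProb I p k tk) {a : A}
    (ha : 0 < y k tk a) (b : A) : auxCost I p c y k tk a ≤ auxCost I p c y k tk b := by
  rw [← sub_nonpos, ← zero_mul (typeProb I p k tk)]
  convert hy.2 k tk hP a b ha using 1
  simp only [auxCost, ← sum_sub_distrib]
  refine sum_congr rfl fun θ _ => sum_congr rfl fun τ _ => ?_
  split_ifs <;> ring

theorem IsBWEps.sum_mul_auxCost_le [Fintype A] [Fintype Θ] (hp : ∀ θ, 0 ≤ p θ)
    {y z : ∀ k, I.T k → A → ℝ} (hy : IsBWEps I p c 0 y) (hz : IsInterim I z)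
    (k : I.K) (tk : I.T k) :
    ∑ a, y k tk a * auxCost I p c y k tk a ≤ ∑ a, z k tk a * auxCost I p c y k tk a := by
  set C := auxCost I p c y k tk
  rcases (typeProb_nonneg hp k tk).eq_or_lt with h0 | hP
  · simp [C, auxCost_eq_zero_of_typeProb_eq_zero hp y h0.symm]
  rcases (univ : Finset A).eq_empty_or_nonempty with hA | hA
  · simp [hA]
  obtain ⟨b, -, hb⟩ := exists_min_image univ C hA
  have hused (a : A) : y k tk a * C a ≤ y k tk a * C b := by
    rcases (hy.1.1 k tk a).eq_or_lt with h | h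
    · simp [← h]
    · exact mul_le_mul_of_nonneg_left (hy.auxCost_le hP h b) h.le
  calc ∑ a, y k tk a * C a ≤ ∑ a, y k tk a * C b := sum_le_sum fun a _ => hused a
    _ = ∑ a, z k tk a * C b := by rw [← sum_mul, ← sum_mul, hy.1.2, hz.2]
    _ ≤ ∑ a, z k tk a * C a :=
      sum_le_sum fun a _ => mul_le_mul_of_nonneg_left (hb a (mem_univ a)) (hz.1 k tk a)

theorem sum_totalFlow_mul_eq_sum_mul_auxCost [Fintype A] [Fintype Θ]
    (y v : ∀ k, I.T k → A → ℝ) :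
    ∑ θ, ∑ τ : ∀ k, I.T k, p θ * I.π θ τ * ∑ a, totalFlow I v τ a * c a (totalFlow I y τ) θ
      = ∑ k, ∑ tk, ∑ a, v k tk a * auxCost I p c y k tk a := by
  set w : Θ → (∀ k, I.T k) → A → ℝ := fun θ τ a => p θ * I.π θ τ * c a (totalFlow I y τ) θ
  have hk (k : I.K) : ∑ tk, ∑ a, v k tk a * auxCost I p c y k tk a
      = ∑ θ, ∑ τ : ∀ k, I.T k, ∑ a, v k (τ k) a * w θ τ a := by
    simp only [auxCost, mul_sum, mul_ite, mul_zero]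
    rw [sum_comm]
    simp only [sum_comm (s := (univ : Finset (I.T k)))]
    simp only [sum_ite_eq, mem_univ, if_true]
    rw [sum_comm]
    exact sum_congr rfl fun θ _ => sum_comm
  simp only [hk, totalFlow, sum_mul, mul_sum]
  symm
  rw [sum_comm]
  refine sum_congr rfl fun θ _ => ?_
  rw [sum_comm]
  refine sum_congr rfl fun τ _ => ?_
  rw [sum_comm]
  exact sum_congr rfl fun a _ => sum_congr rfl fun k _ => by ring

theorem IsBWEps.isMinOn_potPi [Fintype A] [DecidableEq A] [Fintype Θ] (hp : ∀ θ, 0 ≤ p θ)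
    (hΦ : IsPotential c Φ) (hconv : ∀ θ, ConvexOn ℝ (stdSimplex ℝ A) (Φ θ))
    {y : ∀ k, I.T k → A → ℝ} (hy : IsBWEps I p c 0 y) :
    IsMinOn (potPi I p Φ) {z | IsInterim I z} y := by
  intro z hz
  have hfirst (θ : Θ) (τ : ∀ k, I.T k) :
      p θ * I.π θ τ * (Φ θ (totalFlow I y τ)
        + ∑ a, totalFlow I (z - y) τ a * c a (totalFlow I y τ) θ)
      ≤ p θ * I.π θ τ * Φ θ (totalFlow I z τ) := by
    refine mul_le_mul_of_nonneg_left ?_ (mul_nonneg (hp θ) (I.π_nonneg θ τ))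
    simpa [totalFlow_sub] using
      hΦ.add_sum_mul_le (hconv θ) (hy.1.totalFlow_mem_stdSimplex τ) (hz.totalFlow_mem_stdSimplex τ)
  have hgap : 0 ≤ ∑ θ, ∑ τ : ∀ k, I.T k,
      p θ * I.π θ τ * ∑ a, totalFlow I (z - y) τ a * c a (totalFlow I y τ) θ := by
    rw [sum_totalFlow_mul_eq_sum_mul_auxCost]
    refine sum_nonneg fun k _ => sum_nonneg fun tk _ => ?_
    simpa [sub_mul, sum_sub_distrib] using hy.sum_mul_auxCost_le hp hz k tk
  calc potPi I p Φ y
      ≤ potPi I p Φ y + ∑ θ, ∑ τ : ∀ k, I.T k,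
          p θ * I.π θ τ * ∑ a, totalFlow I (z - y) τ a * c a (totalFlow I y τ) θ :=
        le_add_of_nonneg_right hgap
    _ = ∑ θ, ∑ τ : ∀ k, I.T k, p θ * I.π θ τ * (Φ θ (totalFlow I y τ)
          + ∑ a, totalFlow I (z - y) τ a * c a (totalFlow I y τ) θ) := by
        simp only [potPi, mul_add, sum_add_distrib]
    _ ≤ potPi I p Φ z := sum_le_sum fun θ _ => sum_le_sum fun τ _ => hfirst θ τ

theorem potPi_lt_of_isMinOn_of_totalFlow_ne [Fintype A] [Fintype Θ] (hp : ∀ θ, 0 ≤ p θ)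
    (hconv : ∀ θ, StrictConvexOn ℝ (stdSimplex ℝ A) (Φ θ)) {y z : ∀ k, I.T k → A → ℝ}
    (hmin : IsMinOn (potPi I p Φ) {w | IsInterim I w} y) (hy : IsInterim I y)
    (hz : IsInterim I z) {τ₀ : ∀ k, I.T k} (hτ₀ : 0 < ∑ θ, p θ * I.π θ τ₀)
    (hne : totalFlow I y τ₀ ≠ totalFlow I z τ₀) :
    potPi I p Φ y < potPi I p Φ z := by
  have hw (θ : Θ) (τ : ∀ k, I.T k) : 0 ≤ p θ * I.π θ τ := mul_nonneg (hp θ) (I.π_nonneg θ τ)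
  obtain ⟨θ₀, -, hθ₀⟩ := exists_ne_zero_of_sum_ne_zero hτ₀.ne'
  set m := (2⁻¹ : ℝ) • y + (2⁻¹ : ℝ) • z
  have hm : IsInterim I m := convex_setOf_isInterim hy hz (by norm_num) (by norm_num) (by norm_num)
  have hmid (θ : Θ) (τ : ∀ k, I.T k) :
      p θ * I.π θ τ * Φ θ (totalFlow I m τ) ≤ 2⁻¹ * (p θ * I.π θ τ * Φ θ (totalFlow I y τ))
        + 2⁻¹ * (p θ * I.π θ τ * Φ θ (totalFlow I z τ)) := by
    have := (hconv θ).convexOn.2 (hy.totalFlow_mem_stdSimplex τ) (hz.totalFlow_mem_stdSimplex τ)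
      (by norm_num : (0 : ℝ) ≤ 2⁻¹) (by norm_num : (0 : ℝ) ≤ 2⁻¹) (by norm_num)
    rw [smul_eq_mul, smul_eq_mul] at this
    simp only [m, totalFlow_smul_add_smul]
    linarith [mul_le_mul_of_nonneg_left this (hw θ τ)]
  have hmid_lt : p θ₀ * I.π θ₀ τ₀ * Φ θ₀ (totalFlow I m τ₀)
      < 2⁻¹ * (p θ₀ * I.π θ₀ τ₀ * Φ θ₀ (totalFlow I y τ₀))
        + 2⁻¹ * (p θ₀ * I.π θ₀ τ₀ * Φ θ₀ (totalFlow I z τ₀)) := by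
    have := (hconv θ₀).2 (hy.totalFlow_mem_stdSimplex τ₀) (hz.totalFlow_mem_stdSimplex τ₀) hne
      (by norm_num : (0 : ℝ) < 2⁻¹) (by norm_num : (0 : ℝ) < 2⁻¹) (by norm_num)
    rw [smul_eq_mul, smul_eq_mul] at this
    simp only [m, totalFlow_smul_add_smul]
    linarith [mul_lt_mul_of_pos_left this ((hw θ₀ τ₀).lt_of_ne' hθ₀)]
  have hm_lt : potPi I p Φ m < 2⁻¹ * potPi I p Φ y + 2⁻¹ * potPi I p Φ z := by
    simp only [potPi, mul_sum, ← sum_add_distrib]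
    exact sum_lt_sum (fun θ _ => sum_le_sum fun τ _ => hmid θ τ)
      ⟨θ₀, mem_univ _, sum_lt_sum (fun τ _ => hmid θ₀ τ) ⟨τ₀, mem_univ _, hmid_lt⟩⟩
  linarith [isMinOn_iff.1 hmin m hm]

theorem totalFlow_eq_of_isMinOn [Fintype A] [Fintype Θ] (hp : ∀ θ, 0 ≤ p θ)
    (hconv : ∀ θ, StrictConvexOn ℝ (stdSimplex ℝ A) (Φ θ)) {y z : ∀ k, I.T k → A → ℝ}
    (hymin : IsMinOn (potPi I p Φ) {w | IsInterim I w} y)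
    (hzmin : IsMinOn (potPi I p Φ) {w | IsInterim I w} z) (hy : IsInterim I y)
    (hz : IsInterim I z) {τ₀ : ∀ k, I.T k} (hτ₀ : 0 < ∑ θ, p θ * I.π θ τ₀) :
    totalFlow I y τ₀ = totalFlow I z τ₀ := by
  by_contra hne
  exact (potPi_lt_of_isMinOn_of_totalFlow_ne hp hconv hymin hy hz hτ₀ hne).not_ge (hzmin hy)

theorem exists_pos_forall_abs_totalFlow_sub_le [Fintype A] [DecidableEq A] [Fintype Θ]
    (hp : ∀ θ, 0 ≤ p θ) (hΦ : IsPotential c Φ)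
    (hconv : ∀ θ, StrictConvexOn ℝ (stdSimplex ℝ A) (Φ θ)) {y₀ : ∀ k, I.T k → A → ℝ}
    (hmin : IsMinOn (potPi I p Φ) {w | IsInterim I w} y₀) (hy₀ : IsInterim I y₀)
    {δ : ℝ} (hδ : 0 < δ) :
    ∃ α > 0, ∀ y, IsInterim I y → potPi I p Φ y ≤ potPi I p Φ y₀ + α →
      ∀ τ : ∀ k, I.T k, 0 < ∑ θ, p θ * I.π θ τ →
        ∀ a, |totalFlow I y τ a - totalFlow I y₀ τ a| ≤ δ := by
  set far := ⋃ τ ∈ {τ : ∀ k, I.T k | 0 < ∑ θ, p θ * I.π θ τ}, ⋃ a,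
    {y : ∀ k, I.T k → A → ℝ | δ ≤ |totalFlow I y τ a - totalFlow I y₀ τ a|}
  have hfar_closed : IsClosed far :=
    (Set.toFinite _).isClosed_biUnion fun τ _ => isClosed_iUnion_of_finite fun a =>
      isClosed_le continuous_const
        (((continuous_apply a).comp (continuous_totalFlow τ)).sub continuous_const).abs
  have hfar_gt : ∀ y ∈ {y | IsInterim I y} ∩ far, potPi I p Φ y₀ < potPi I p Φ y := by
    rintro y ⟨hy, hfar⟩
    obtain ⟨τ, hτ, a, ha⟩ : ∃ τ, 0 < ∑ θ, p θ * I.π θ τ ∧ ∃ a,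
        δ ≤ |totalFlow I y τ a - totalFlow I y₀ τ a| := by
      simpa [far] using hfar
    refine potPi_lt_of_isMinOn_of_totalFlow_ne hp hconv hmin hy₀ hy hτ fun h => ?_
    rw [h, sub_self, abs_zero] at ha
    exact ha.not_gt hδ
  obtain ⟨α, hα, hα_gt⟩ :=
    (isCompact_setOf_isInterim.inter_right hfar_closed).exists_pos_forall_add_lt
      (hΦ.continuousOn_potPi.mono Set.inter_subset_left) hfar_gt
  refine ⟨α, hα, fun y hy hnear τ hτ a => ?_⟩
  by_contra! hclose
  exact (hα_gt y ⟨hy, by simpa [far] using ⟨τ, hτ, a, hclose.le⟩⟩).not_ge hnear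

end

variable [Fintype A] [DecidableEq A] [Fintype Θ]

theorem near_minimizers_close_to_equilibrium_general
    (p : Θ → ℝ) (hp_pos : ∀ θ, 0 < p θ)
    (c : A → (A → ℝ) → Θ → ℝ)
    (Φ : Θ → (A → ℝ) → ℝ) (hΦ : IsPotential c Φ)
    (hconv : ∀ θ, StrictConvexOn ℝ (stdSimplex ℝ A) (Φ θ))
    (I : InfoStructure Θ)
    (ystar : ∀ k, I.T k → A → ℝ) (hstar : IsBWEps I p c 0 ystar) :
    (∀ yhat : ∀ k, I.T k → A → ℝ, IsBWEps I p c 0 yhat →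
      ∀ τ : ∀ k, I.T k, 0 < ∑ θ, p θ * I.π θ τ →
        ∀ a, totalFlow I yhat τ a = totalFlow I ystar τ a) ∧
    ∀ δ : ℝ, 0 < δ → ∃ α : ℝ, 0 < α ∧
      ∀ yhat : ∀ k, I.T k → A → ℝ, IsInterim I yhat →
        (∀ zhat : ∀ k, I.T k → A → ℝ, IsInterim I zhat →
          potPi I p Φ yhat ≤ potPi I p Φ zhat + α) →
        ∀ τ : ∀ k, I.T k, 0 < ∑ θ, p θ * I.π θ τ →
          ∀ a, |totalFlow I yhat τ a - totalFlow I ystar τ a| ≤ δ := by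
  have hp θ : 0 ≤ p θ := (hp_pos θ).le
  have hmin {y : ∀ k, I.T k → A → ℝ} (hy : IsBWEps I p c 0 y) :
      IsMinOn (potPi I p Φ) {z | IsInterim I z} y :=
    hy.isMinOn_potPi hp hΦ fun θ => (hconv θ).convexOn
  refine ⟨fun yhat hyhat τ hτ => congrFun (totalFlow_eq_of_isMinOn hp hconv (hmin hyhat)
    (hmin hstar) hyhat.1 hstar.1 hτ), fun δ hδ => ?_⟩
  obtain ⟨α, hα, hclose⟩ :=
    exists_pos_forall_abs_totalFlow_sub_le hp hΦ hconv (hmin hstar) hstar.1 hδ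
  exact ⟨α, hα, fun yhat hyhat hnear => hclose yhat hyhat (hnear ystar hstar.1)⟩

/-- with a strictly convex potential, equilibrium total flows are unique
(at type profiles of positive probability), and near-minimizers of the potential have
total flows close to the equilibrium total flows. -/
theorem near_minimizers_close_to_equilibrium
    (p : Θ → ℝ) (hp_pos : ∀ θ, 0 < p θ) (hp_sum : ∑ θ, p θ = 1)
    (c : A → (A → ℝ) → Θ → ℝ)
    (hc : ∀ a θ, ContinuousOn (fun y => c a y θ) (stdSimplex ℝ A))
    (Φ : Θ → (A → ℝ) → ℝ) (hΦ : IsPotential c Φ)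
    (hconv : ∀ θ, StrictConvexOn ℝ (stdSimplex ℝ A) (Φ θ))
    (I : InfoStructure Θ)
    (ystar : ∀ k, I.T k → A → ℝ) (hstar : IsBWEps I p c 0 ystar) :
    (∀ yhat : ∀ k, I.T k → A → ℝ, IsBWEps I p c 0 yhat →
      ∀ τ : ∀ k, I.T k, 0 < ∑ θ, p θ * I.π θ τ →
        ∀ a, totalFlow I yhat τ a = totalFlow I ystar τ a) ∧
    ∀ δ : ℝ, 0 < δ → ∃ α : ℝ, 0 < α ∧
      ∀ yhat : ∀ k, I.T k → A → ℝ, IsInterim I yhat →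
        (∀ zhat : ∀ k, I.T k → A → ℝ, IsInterim I zhat →
          potPi I p Φ yhat ≤ potPi I p Φ zhat + α) →
        ∀ τ : ∀ k, I.T k, 0 < ∑ θ, p θ * I.π θ τ →
          ∀ a, |totalFlow I yhat τ a - totalFlow I ystar τ a| ≤ δ :=
  near_minimizers_close_to_equilibrium_general p hp_pos c Φ hΦ hconv I ystar hstar

end NonatomicGames
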